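/- If Y = ⟨X,β⟩ + ε with E[ε | X] = 0, R satisfies the MAR condition with observance probability p(X) = P(R=1|X), and p(X) > 0 almost surely, then E[(R/p(X))·Y + (1 − R/p(X))·⟨X,β⟩] = E[Y]. -/

import Mathlib

open MeasureTheory
open scoped RealInnerProductSpace

/-- Inverse-probability-weighted identity: under the FLMSR with MAR responses and observance
probability `p(X) > 0` a.s., `E[(R/p(X))·Y + (1 − R/p(X))·⟨X,β⟩] = E[Y]`. -/
theorem ipw_mean_identity
    {H : Type*} [NormedAddCommGroup H] [InnerProductSpace ℝ H] [CompleteSpace H]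
    [TopologicalSpace.SeparableSpace H] [MeasurableSpace H] [BorelSpace H]
    {Ω : Type*} [MeasurableSpace Ω] (μ : Measure Ω) [IsProbabilityMeasure μ]
    (X : Ω → H) (Y : Ω → ℝ) (R : Ω → ℝ) (ε : Ω → ℝ) (β : H) (p : H → ℝ)
    (hX : Measurable X) (hR : Measurable R) (hp : Measurable p)
    (hmodel : ∀ ω, Y ω = ⟪X ω, β⟫ + ε ω)
    (hεint : Integrable ε μ)
    (hYint : Integrable Y μ)
    (hεcond : μ[ε | MeasurableSpace.comap X inferInstance] =ᵐ[μ] 0)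
    (hbin : ∀ ω, R ω = 0 ∨ R ω = 1)
    (hMAR : μ[R | MeasurableSpace.comap (fun ω => (Y ω, X ω)) inferInstance]
      =ᵐ[μ] fun ω => p (X ω))
    (hMARX : μ[R | MeasurableSpace.comap X inferInstance] =ᵐ[μ] fun ω => p (X ω))
    (hppos : ∀ᵐ ω ∂μ, 0 < p (X ω))
    (hint : Integrable (fun ω => (R ω / p (X ω)) * Y ω
      + (1 - R ω / p (X ω)) * ⟪X ω, β⟫) μ) :
    ∫ ω, ((R ω / p (X ω)) * Y ω + (1 - R ω / p (X ω)) * ⟪X ω, β⟫) ∂μ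
      = ∫ ω, Y ω ∂μ := by
  by_cases hm : MeasurableSpace.comap (fun ω => (Y ω, X ω))
      (inferInstance : MeasurableSpace (ℝ × H)) ≤ ‹MeasurableSpace Ω›
  swap
  · rw [condExp_of_not_le hm] at hMAR
    have : ∀ᵐ ω ∂μ, False := by
      filter_upwards [hppos, hMAR.symm] with ω h1 h2
      simp at h2; rw [h2] at h1; exact lt_irrefl 0 h1
    obtain ⟨ω, hω⟩ := this.exists
    exact hω.elim
  -- main proof
  set m : MeasurableSpace Ω := MeasurableSpace.comap (fun ω => (Y ω, X ω)) inferInstance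
    with hm_def
  have hXβint : Integrable (fun ω => (⟪X ω, β⟫ : ℝ)) μ := by
    have : (fun ω => (⟪X ω, β⟫ : ℝ)) = fun ω => Y ω - ε ω := by
      funext ω; rw [hmodel ω]; ring
    rw [this]; exact hYint.sub hεint
  -- rewrite the integrand
  have hrw : ∀ ω, (R ω / p (X ω)) * Y ω + (1 - R ω / p (X ω)) * ⟪X ω, β⟫
      = ⟪X ω, β⟫ + (ε ω / p (X ω)) * R ω := by
    intro ω
    have : Y ω = ⟪X ω, β⟫ + ε ω := hmodel ω
    rw [this]; ring
  have hfRint : Integrable (fun ω => (ε ω / p (X ω)) * R ω) μ := by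
    have := hint.sub hXβint
    refine this.congr (ae_of_all _ fun ω => ?_)
    simp only [Pi.sub_apply]
    rw [hrw ω]; ring
  -- f is m-strongly-measurable
  set f : Ω → ℝ := fun ω => ε ω / p (X ω) with hf_def
  have hfm : StronglyMeasurable[m] f := by
    have hmeas : Measurable fun q : ℝ × H => (q.1 - ⟪q.2, β⟫) / p q.2 := by
      refine Measurable.div ?_ (hp.comp measurable_snd)
      exact measurable_fst.sub ((Continuous.measurable (continuous_id.inner continuous_const)).comp measurable_snd)
    have hφ : Measurable[m] (fun ω => (Y ω, X ω)) := fun s hs =>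
      MeasurableSpace.measurableSet_comap.mpr ⟨s, hs, rfl⟩
    have : Measurable[m] f := by
      have := hmeas.comp hφ
      convert this using 1
      funext ω
      simp only [hf_def, Function.comp_apply]
      rw [hmodel ω]; ring_nf
    exact this.stronglyMeasurable
  have hRint : Integrable R μ := by
    refine Integrable.mono' (integrable_const 1) hR.aestronglyMeasurable ?_
    refine ae_of_all _ fun ω => ?_
    rcases hbin ω with h | h <;> simp [h]
  -- key step
  have hkey : ∫ ω, f ω * R ω ∂μ = ∫ ω, ε ω ∂μ := by
    have h1 : ∫ ω, f ω * R ω ∂μ = ∫ ω, (μ[f * R|m]) ω ∂μ :=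
      (integral_condExp (μ := μ) hm (f := f * R)).symm
    rw [h1]
    have h2 : μ[f * R|m] =ᵐ[μ] f * μ[R|m] := condExp_mul_of_stronglyMeasurable_left hfm hfRint hRint
    have h3 : (f * μ[R|m] : Ω → ℝ) =ᵐ[μ] fun ω => f ω * p (X ω) := by
      filter_upwards [hMAR] with ω hω
      simp [hω]
    have h4 : (fun ω => f ω * p (X ω)) =ᵐ[μ] ε := by
      filter_upwards [hppos] with ω hω
      simp only [hf_def]
      field_simp
    exact integral_congr_ae ((h2.trans h3).trans h4)
  -- assemble
  rw [integral_congr_ae (ae_of_all μ fun ω => hrw ω), integral_add hXβint hfRint, hkey,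
    ← integral_add hXβint hεint]
  exact integral_congr_ae (ae_of_all μ fun ω => (hmodel ω).symm)
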